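/- arXiv:math/0207144 — 2 statements merged into one kernel-verified Lean document; each statement's English description precedes it below -/
import Mathlib

section
/- Let η > 0 be a real number and let g : ℝ → ℝ be twice differentiable with g(0) = 0, g'(0) = 0, and g''(s) + η·g(s) ≤ 0 for all s ∈ [0, π/√η]. Then g(s) ≤ 0 for all s ∈ [0, π/√η]. -/
open Real Set Filter Topology

/-- ODE comparison principle (Step 1, case η > 0, in the proof of the Jacobi field
estimate): if `g` is twice differentiable with `g 0 = 0`, `g' 0 = 0` and
`g'' s + η * g s ≤ 0` for all `s ∈ [0, π/√η]`, where `η > 0`, then `g s ≤ 0` on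
`[0, π/√η]`. -/
theorem ode_comparison_pos_eta (η : ℝ) (hη : 0 < η) (g : ℝ → ℝ)
    (hg : Differentiable ℝ g) (hg' : Differentiable ℝ (deriv g))
    (h0 : g 0 = 0) (h0' : deriv g 0 = 0)
    (hineq : ∀ s ∈ Set.Icc (0 : ℝ) (Real.pi / Real.sqrt η),
      deriv (deriv g) s + η * g s ≤ 0) :
    ∀ s ∈ Set.Icc (0 : ℝ) (Real.pi / Real.sqrt η), g s ≤ 0 := by
  set a := Real.sqrt η with ha_def
  have ha : 0 < a := Real.sqrt_pos.mpr hη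
  have ha2 : a * a = η := Real.mul_self_sqrt hη.le
  set T := Real.pi / a with hT_def
  have hT : 0 < T := div_pos Real.pi_pos ha
  have haT : a * T = Real.pi := by
    rw [hT_def, mul_div_cancel₀ _ ha.ne']
  -- derivatives of sin(a s), cos(a s)
  have hsin' : ∀ s : ℝ, HasDerivAt (fun s => Real.sin (a * s)) (a * Real.cos (a * s)) s := by
    intro s
    have := (Real.hasDerivAt_sin (a * s)).comp s ((hasDerivAt_id s).const_mul a)
    simpa [Function.comp_def, mul_comm] using this
  have hcos' : ∀ s : ℝ, HasDerivAt (fun s => Real.cos (a * s)) (-(a * Real.sin (a * s))) s := by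
    intro s
    have := (Real.hasDerivAt_cos (a * s)).comp s ((hasDerivAt_id s).const_mul a)
    simpa [Function.comp_def, mul_comm] using this
  have hsin_nonneg : ∀ s ∈ Icc (0 : ℝ) T, 0 ≤ Real.sin (a * s) := by
    intro s hs
    apply Real.sin_nonneg_of_nonneg_of_le_pi
    · exact mul_nonneg ha.le hs.1
    · calc a * s ≤ a * T := by nlinarith [hs.2]
        _ = Real.pi := haT
  have hsin_pos : ∀ s ∈ Ioo (0 : ℝ) T, 0 < Real.sin (a * s) := by
    intro s hs
    apply Real.sin_pos_of_pos_of_lt_pi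
    · exact mul_pos ha hs.1
    · calc a * s < a * T := by nlinarith [hs.2]
        _ = Real.pi := haT
  set W : ℝ → ℝ := fun s => deriv g s * Real.sin (a * s) - a * g s * Real.cos (a * s) with hW_def
  have hW' : ∀ s : ℝ,
      HasDerivAt W ((deriv (deriv g) s + η * g s) * Real.sin (a * s)) s := by
    intro s
    have h1 : HasDerivAt g (deriv g s) s := (hg s).hasDerivAt
    have h2 : HasDerivAt (deriv g) (deriv (deriv g) s) s := (hg' s).hasDerivAt
    have := (h2.mul (hsin' s)).sub ((h1.const_mul a).mul (hcos' s))
    refine this.congr_deriv ?_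
    linear_combination (g s * Real.sin (a * s)) * ha2
  have hWc : Continuous W := by
    have hs : Continuous (fun s : ℝ => Real.sin (a * s)) :=
      Real.continuous_sin.comp (continuous_const.mul continuous_id)
    have hc : Continuous (fun s : ℝ => Real.cos (a * s)) :=
      Real.continuous_cos.comp (continuous_const.mul continuous_id)
    exact (hg'.continuous.mul hs).sub ((continuous_const.mul hg.continuous).mul hc)
  have hW0 : W 0 = 0 := by simp [hW_def, h0, h0']
  have hWanti : AntitoneOn W (Icc 0 T) := by
    apply antitoneOn_of_deriv_nonpos (convex_Icc _ _) hWc.continuousOn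
    · intro s _
      exact (hW' s).differentiableAt.differentiableWithinAt
    · intro s hs
      rw [interior_Icc] at hs
      rw [(hW' s).deriv]
      exact mul_nonpos_of_nonpos_of_nonneg (hineq s (Ioo_subset_Icc_self hs))
        (hsin_nonneg s (Ioo_subset_Icc_self hs))
  have hWle : ∀ s ∈ Icc (0 : ℝ) T, W s ≤ 0 := by
    intro s hs
    have := hWanti (left_mem_Icc.mpr hT.le) hs hs.1
    rwa [hW0] at this
  set q : ℝ → ℝ := fun s => g s / Real.sin (a * s) with hq_def
  have hq' : ∀ s ∈ Ioo (0 : ℝ) T,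
      HasDerivAt q (W s / (Real.sin (a * s)) ^ 2) s := by
    intro s hs
    have h1 : HasDerivAt g (deriv g s) s := (hg s).hasDerivAt
    have := h1.div (hsin' s) (hsin_pos s hs).ne'
    refine this.congr_deriv ?_
    rw [hW_def]
    ring
  have hqanti : AntitoneOn q (Ioo 0 T) := by
    apply antitoneOn_of_deriv_nonpos (convex_Ioo _ _)
    · intro s hs
      exact (hq' s hs).differentiableAt.continuousAt.continuousWithinAt
    · intro s hs
      rw [interior_Ioo] at hs
      exact (hq' s hs).differentiableAt.differentiableWithinAt
    · intro s hs
      rw [interior_Ioo] at hs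
      rw [(hq' s hs).deriv]
      apply div_nonpos_of_nonpos_of_nonneg
      · exact hWle s (Ioo_subset_Icc_self hs)
      · positivity
  -- limit of q at 0⁺ is 0
  have hslope_g : Tendsto (fun s => g s / s) (𝓝[≠] (0 : ℝ)) (𝓝 0) := by
    have h1 : HasDerivAt g (deriv g 0) 0 := (hg 0).hasDerivAt
    rw [hasDerivAt_iff_tendsto_slope, h0'] at h1
    refine h1.congr ?_
    intro s
    simp [slope_def_field, h0]
  have hslope_sin : Tendsto (fun s => Real.sin (a * s) / s) (𝓝[≠] (0 : ℝ)) (𝓝 a) := by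
    have h1 := hsin' 0
    rw [hasDerivAt_iff_tendsto_slope] at h1
    have : a * Real.cos (a * 0) = a := by simp
    rw [this] at h1
    refine h1.congr ?_
    intro s
    simp [slope_def_field]
  have hqlim : Tendsto q (𝓝[>] (0 : ℝ)) (𝓝 0) := by
    have hdiv := hslope_g.div hslope_sin ha.ne'
    have h0a : (0 : ℝ) / a = 0 := zero_div a
    rw [h0a] at hdiv
    have heq : ∀ s : ℝ, s ≠ 0 → g s / s / (Real.sin (a * s) / s) = q s := by
      intro s hs
      rw [hq_def]
      exact div_div_div_cancel_right₀ hs _ _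
    have h2 : Tendsto q (𝓝[≠] (0 : ℝ)) (𝓝 0) := by
      refine hdiv.congr' ?_
      filter_upwards [self_mem_nhdsWithin] with s hs
      exact heq s hs
    exact h2.mono_left (nhdsWithin_mono _ fun x hx => ne_of_gt hx)
  have hqle : ∀ s ∈ Ioo (0 : ℝ) T, q s ≤ 0 := by
    intro s hs
    have hev : ∀ᶠ t in 𝓝[>] (0 : ℝ), q s ≤ q t := by
      filter_upwards [Ioo_mem_nhdsGT_of_mem (Set.mem_Ico.mpr ⟨le_refl (0:ℝ), hs.1⟩)] with t ht
      exact hqanti ⟨ht.1, ht.2.trans hs.2⟩ hs ht.2.le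
    exact ge_of_tendsto hqlim hev
  have hgle : ∀ s ∈ Ioo (0 : ℝ) T, g s ≤ 0 := by
    intro s hs
    have h1 : g s = q s * Real.sin (a * s) := by
      rw [hq_def]
      exact (div_mul_cancel₀ _ (hsin_pos s hs).ne').symm
    rw [h1]
    exact mul_nonpos_of_nonpos_of_nonneg (hqle s hs) (hsin_nonneg s (Ioo_subset_Icc_self hs))
  -- conclude by closure
  intro s hs
  have hclo : Icc (0 : ℝ) T ⊆ closure (Ioo (0 : ℝ) T) := by
    rw [closure_Ioo hT.ne]
  have hsub : closure (Ioo (0 : ℝ) T) ⊆ {x : ℝ | g x ≤ 0} :=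
    closure_minimal hgle (isClosed_le hg.continuous continuous_const)
  exact hsub (hclo hs)
end

section
/- Let ρ, x be real numbers with 0 < ρ ≤ x ≤ 1, let m : [0,1] → ℝ be continuous with 0 ≤ m(s) ≤ 1 + s·x for all s ∈ [0,1], and let a : [0,1] → ℝ be twice differentiable with a(0) = 0, a'(0) = 0, and a''(s) = ρ²·a(s) + ρ²·m(s) for all s ∈ [0,1]. Then 0 ≤ a(s) ≤ ρ·x·e^{ρ·s} for all s ∈ [0,1]. -/
open Set

lemma mono_aux (f f' : ℝ → ℝ)
    (hd : ∀ s ∈ Icc (0:ℝ) 1, HasDerivAt f (f' s) s)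
    (hpos : ∀ s ∈ Icc (0:ℝ) 1, 0 ≤ f' s) :
    ∀ s ∈ Icc (0:ℝ) 1, f 0 ≤ f s := by
  have hcont : ContinuousOn f (Icc 0 1) := fun s hs =>
    (hd s hs).continuousAt.continuousWithinAt
  have hmono : MonotoneOn f (Icc 0 1) := by
    apply monotoneOn_of_deriv_nonneg (convex_Icc 0 1) hcont
    · intro s hs
      rw [interior_Icc] at hs
      exact (hd s (Ioo_subset_Icc_self hs)).differentiableAt.differentiableWithinAt
    · intro s hs
      rw [interior_Icc] at hs
      rw [(hd s (Ioo_subset_Icc_self hs)).deriv]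
      exact hpos s (Ioo_subset_Icc_self hs)
  intro s hs
  exact hmono (left_mem_Icc.mpr zero_le_one) hs hs.1

lemma nonneg_aux (ρ : ℝ) (w w' g : ℝ → ℝ)
    (h1 : ∀ s ∈ Icc (0:ℝ) 1, HasDerivAt w (w' s) s)
    (h2 : ∀ s ∈ Icc (0:ℝ) 1, HasDerivAt w' (g s) s)
    (hg : ∀ s ∈ Icc (0:ℝ) 1, ρ^2 * w s ≤ g s)
    (hw0 : w 0 = 0) (hw'0 : w' 0 = 0) :
    ∀ s ∈ Icc (0:ℝ) 1, 0 ≤ w s := by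
  have hlin : ∀ s : ℝ, HasDerivAt (fun t : ℝ => ρ * t) ρ s := by
    intro s; simpa using (hasDerivAt_id s).const_mul ρ
  have hneglin : ∀ s : ℝ, HasDerivAt (fun t : ℝ => -(ρ * t)) (-ρ) s :=
    fun s => (hlin s).neg
  have hu : ∀ s ∈ Icc (0:ℝ) 1, 0 ≤ w' s - ρ * w s := by
    have hud : ∀ s ∈ Icc (0:ℝ) 1,
        HasDerivAt (fun t => Real.exp (ρ*t) * (w' t - ρ * w t))
          (Real.exp (ρ*s) * (g s - ρ^2 * w s)) s := by
      intro s hs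
      have he : HasDerivAt (fun t : ℝ => Real.exp (ρ*t)) (Real.exp (ρ*s) * ρ) s :=
        (hlin s).exp
      have hsub : HasDerivAt (fun t => w' t - ρ * w t) (g s - ρ * w' s) s :=
        (h2 s hs).sub ((h1 s hs).const_mul ρ)
      have := he.mul hsub
      refine this.congr_deriv ?_
      ring
    intro s hs
    have key := mono_aux _ _ hud (fun t ht =>
      mul_nonneg (Real.exp_nonneg _) (sub_nonneg.mpr (hg t ht))) s hs
    have h0 : Real.exp (ρ*0) * (w' 0 - ρ * w 0) = 0 := by simp [hw0, hw'0]
    rw [h0] at key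
    have hpos : (0:ℝ) < Real.exp (ρ*s) := Real.exp_pos _
    nlinarith [key]
  have hvd : ∀ s ∈ Icc (0:ℝ) 1,
      HasDerivAt (fun t => Real.exp (-(ρ*t)) * w t)
        (Real.exp (-(ρ*s)) * (w' s - ρ * w s)) s := by
    intro s hs
    have he : HasDerivAt (fun t : ℝ => Real.exp (-(ρ*t))) (Real.exp (-(ρ*s)) * (-ρ)) s :=
      (hneglin s).exp
    have := he.mul (h1 s hs)
    refine this.congr_deriv ?_
    ring
  intro s hs
  have key := mono_aux _ _ hvd (fun t ht =>
    mul_nonneg (Real.exp_nonneg _) (hu t ht)) s hs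
  have h0 : Real.exp (-(ρ*0)) * w 0 = 0 := by simp [hw0]
  rw [h0] at key
  have hpos : (0:ℝ) < Real.exp (-(ρ*s)) := Real.exp_pos _
  nlinarith [key]

lemma cosh_bound {u : ℝ} (hu : 0 ≤ u) : Real.cosh u - 1 ≤ u^2/2 * Real.exp u := by
  have h1 : 1 - u ≤ Real.exp (-u) := by
    have := Real.add_one_le_exp (-u); linarith
  have h2 : Real.exp (-u) ≤ 1 := Real.exp_le_one_iff.mpr (by linarith)
  have hpos : (0:ℝ) < Real.exp u := Real.exp_pos u
  have hid : Real.cosh u - 1 = Real.exp u / 2 * (1 - Real.exp (-u))^2 := by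
    rw [Real.cosh_eq, Real.exp_neg]
    field_simp
    ring
  rw [hid]
  have hsq : (1 - Real.exp (-u))^2 ≤ u^2 := by nlinarith
  nlinarith

lemma sinh_bound {u : ℝ} (hu : 0 ≤ u) :
    Real.sinh u - u ≤ u^2/2 * Real.exp u := by
  have h1 : 1 - u ≤ Real.exp (-u) := by
    have := Real.add_one_le_exp (-u); linarith
  have hpos : (0:ℝ) < Real.exp u := Real.exp_pos u
  have hnn : (0:ℝ) ≤ Real.exp (-u) := (Real.exp_pos _).le
  have hid : Real.sinh u - u =
      Real.exp u / 2 * (1 - (Real.exp (-u))^2 - 2*u*Real.exp (-u)) := by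
    rw [Real.sinh_eq, Real.exp_neg]
    have : Real.exp u ≠ 0 := hpos.ne'
    field_simp
  rw [hid]
  have hkey : 1 - (Real.exp (-u))^2 - 2*u*Real.exp (-u) ≤ u^2 := by nlinarith
  nlinarith


set_option maxHeartbeats 1000000 in
/-- Normalized analytic content of the Jacobi field estimate (Lemma 5.3): the
solution `a` of the scalar ODE `a'' = ρ² a + ρ² m` with zero initial data, where
`0 < ρ ≤ x ≤ 1` and `0 ≤ m s ≤ 1 + s x`, satisfies `0 ≤ a s ≤ ρ x e^{ρ s}` on `[0,1]`. -/
theorem jacobi_comparison_bound (ρ x : ℝ) (hρ : 0 < ρ) (hρx : ρ ≤ x) (hx1 : x ≤ 1)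
    (m a a' : ℝ → ℝ)
    (hmcont : ContinuousOn m (Set.Icc 0 1))
    (hm : ∀ s ∈ Set.Icc (0 : ℝ) 1, 0 ≤ m s ∧ m s ≤ 1 + s * x)
    (ha0 : a 0 = 0) (ha'0 : a' 0 = 0)
    (hderiv1 : ∀ s ∈ Set.Icc (0 : ℝ) 1, HasDerivAt a (a' s) s)
    (hderiv2 : ∀ s ∈ Set.Icc (0 : ℝ) 1,
      HasDerivAt a' (ρ ^ 2 * a s + ρ ^ 2 * m s) s) :
    ∀ s ∈ Set.Icc (0 : ℝ) 1, 0 ≤ a s ∧ a s ≤ ρ * x * Real.exp (ρ * s) := by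
  have hρ' : ρ ≠ 0 := hρ.ne'
  -- nonnegativity of a
  have hanonneg : ∀ s ∈ Icc (0:ℝ) 1, 0 ≤ a s := by
    apply nonneg_aux ρ a a' (fun s => ρ ^ 2 * a s + ρ ^ 2 * m s) hderiv1 hderiv2 _ ha0 ha'0
    intro s hs
    have h := (hm s hs).1
    have : 0 ≤ ρ ^ 2 * m s := by positivity
    show ρ^2 * a s ≤ ρ ^ 2 * a s + ρ ^ 2 * m s
    linarith
  -- the comparison function b and its derivatives
  set b : ℝ → ℝ := fun s => Real.cosh (ρ*s) - 1 + x/ρ * Real.sinh (ρ*s) - s*x with hbdef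
  set b' : ℝ → ℝ := fun s => ρ * Real.sinh (ρ*s) + x * Real.cosh (ρ*s) - x with hb'def
  have hlin : ∀ s : ℝ, HasDerivAt (fun t : ℝ => ρ * t) ρ s := by
    intro s; simpa using (hasDerivAt_id s).const_mul ρ
  have hbd : ∀ s : ℝ, HasDerivAt b (b' s) s := by
    intro s
    have hc : HasDerivAt (fun t : ℝ => Real.cosh (ρ*t)) (Real.sinh (ρ*s) * ρ) s :=
      (hlin s).cosh
    have hsn : HasDerivAt (fun t : ℝ => x/ρ * Real.sinh (ρ*t)) (x/ρ * (Real.cosh (ρ*s) * ρ)) s :=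
      ((hlin s).sinh).const_mul (x/ρ)
    have hx : HasDerivAt (fun t : ℝ => t*x) x s := by
      simpa using (hasDerivAt_id s).mul_const x
    have := ((hc.sub_const 1).add hsn).sub hx
    refine this.congr_deriv ?_
    simp only [hb'def]
    field_simp
  have hbd' : ∀ s : ℝ, HasDerivAt b' (ρ^2 * Real.cosh (ρ*s) + ρ*x*Real.sinh (ρ*s)) s := by
    intro s
    have hs1 : HasDerivAt (fun t : ℝ => ρ * Real.sinh (ρ*t)) (ρ * (Real.cosh (ρ*s) * ρ)) s :=
      ((hlin s).sinh).const_mul ρ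
    have hc1 : HasDerivAt (fun t : ℝ => x * Real.cosh (ρ*t)) (x * (Real.sinh (ρ*s) * ρ)) s :=
      ((hlin s).cosh).const_mul x
    have := (hs1.add hc1).sub_const x
    refine this.congr_deriv ?_
    ring
  -- b - a ≥ 0 by the comparison lemma
  have hba : ∀ s ∈ Icc (0:ℝ) 1, 0 ≤ b s - a s := by
    apply nonneg_aux ρ (fun s => b s - a s) (fun s => b' s - a' s)
      (fun s => (ρ^2 * Real.cosh (ρ*s) + ρ*x*Real.sinh (ρ*s)) - (ρ ^ 2 * a s + ρ ^ 2 * m s))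
    · intro s hs; exact (hbd s).sub (hderiv1 s hs)
    · intro s hs; exact (hbd' s).sub (hderiv2 s hs)
    · intro s hs
      have hm2 := (hm s hs).2
      simp only [hbdef]
      have hid : ρ^2 * (x/ρ * Real.sinh (ρ*s)) = ρ*x*Real.sinh (ρ*s) := by
        field_simp
      have key : ρ^2 * m s ≤ ρ^2 * (1 + s*x) :=
        mul_le_mul_of_nonneg_left hm2 (sq_nonneg ρ)
      nlinarith [hid, key]
    · simp [hbdef, ha0]
    · simp [hb'def, ha'0]
  -- bound b
  intro s hs
  obtain ⟨hs0, hs1⟩ := hs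
  refine ⟨hanonneg s ⟨hs0, hs1⟩, ?_⟩
  have hab := hba s ⟨hs0, hs1⟩
  have hu0 : 0 ≤ ρ*s := by positivity
  have hE : (0:ℝ) < Real.exp (ρ*s) := Real.exp_pos _
  have h1 := cosh_bound hu0
  have h2 := sinh_bound hu0
  have hxρ : 0 ≤ x/ρ := div_nonneg (by linarith) hρ.le
  have h3 : x/ρ * (Real.sinh (ρ*s) - (ρ*s)) ≤ x/ρ * ((ρ*s)^2/2 * Real.exp (ρ*s)) :=
    mul_le_mul_of_nonneg_left h2 hxρ
  have e1 : x/ρ * (Real.sinh (ρ*s) - (ρ*s)) = x/ρ * Real.sinh (ρ*s) - x*s := by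
    field_simp
  have e2 : x/ρ * ((ρ*s)^2/2 * Real.exp (ρ*s)) = x*ρ*s^2/2 * Real.exp (ρ*s) := by
    field_simp
  rw [e1, e2] at h3
  have hbb : b s ≤ (ρ*s)^2/2 * Real.exp (ρ*s) + x*ρ*s^2/2 * Real.exp (ρ*s) := by
    simp only [hbdef]
    linarith
  have hfin : (ρ*s)^2/2 * Real.exp (ρ*s) + x*ρ*s^2/2 * Real.exp (ρ*s) ≤
      ρ * x * Real.exp (ρ*s) := by
    have hs2 : s^2 ≤ 1 := by nlinarith
    have hx0 : 0 ≤ x := le_trans hρ.le hρx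
    have hA : ρ^2 * s^2 ≤ ρ * x := by nlinarith [mul_le_mul_of_nonneg_left hs2 (sq_nonneg ρ)]
    have hB : x*ρ*s^2 ≤ ρ*x := by nlinarith [mul_le_mul_of_nonneg_left hs2 (mul_nonneg hx0 hρ.le)]
    have hcoef : (ρ*s)^2/2 + x*ρ*s^2/2 ≤ ρ * x := by nlinarith [hA, hB]
    have := mul_le_mul_of_nonneg_right hcoef hE.le
    nlinarith [this]
  calc a s ≤ b s := by linarith
    _ ≤ _ := le_trans hbb hfin
end
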